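/- Let p, ε ∈ (0,1) with p + ε ≤ 1, K ≥ 2, and let q : A → [0,1] be a posterior over the optimal arm with q_max = max_a q(a). In the Bernoulli bandit where arm a has conditional mean p+ε if a = A_* and p otherwise, the Shannon information gain under Thompson sampling, g = Σ_{a,a_*} q(a) q(a_*) D_KL(Bernoulli(mean of R_a given A_*=a_*) ‖ Bernoulli(p + ε q(a))), satisfies g ≥ 2 ε² q_max² (1 − q_max)². -/

import Mathlib

/-!
The information gain is a sum of nonnegative terms, so it is at least its diagonal term at an
arm `a` with `q a = qmax`, namely `qmax² · D(Bern(p + ε) ‖ Bern(p + ε qmax))`. Pinsker's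
inequality for Bernoulli distributions, `D(s ‖ r) ≥ 2 (s - r)²`, bounds this from below by
`2 qmax² ε² (1 - qmax)²`. Pinsker itself follows by minimising `x ↦ D(x ‖ r) - 2 (x - r)²`:
its derivative is `G x - G r` for `G x = log x - log (1 - x) - 4 x`, which is monotone on
`(0, 1)` because `x (1 - x) ≤ 1 / 4`.
-/

open Real Set

/-- At `s = 0` or `s = 1` the junk value `log 0 = 0` is multiplied by `0`, matching the
convention `0 log 0 = 0`. -/
noncomputable def bernoulliKL (s r : ℝ) : ℝ :=
  s * log (s / r) + (1 - s) * log ((1 - s) / (1 - r))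

@[simp]
lemma bernoulliKL_self (s : ℝ) : bernoulliKL s s = 0 := by
  simp [bernoulliKL]

lemma mul_log_div (x : ℝ) {r : ℝ} (hr : r ≠ 0) : x * log (x / r) = x * log x - x * log r := by
  rcases eq_or_ne x 0 with rfl | hx
  · simp
  · rw [log_div hx hr]; ring

lemma monotoneOn_log_sub_log_one_sub_sub_four_mul :
    MonotoneOn (fun x => log x - log (1 - x) - 4 * x) (Ioo 0 1) := by
  have hderiv : ∀ x ∈ Ioo (0 : ℝ) 1,
      HasDerivAt (fun x => log x - log (1 - x) - 4 * x) (1 / (x * (1 - x)) - 4) x := by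
    intro x hx
    have hx0 : x ≠ 0 := hx.1.ne'
    have h1x : 1 - x ≠ 0 := (sub_pos.2 hx.2).ne'
    have := ((hasDerivAt_log hx0).sub
      ((hasDerivAt_log h1x).comp x ((hasDerivAt_id x).const_sub 1))).sub
      ((hasDerivAt_id x).const_mul 4)
    refine this.congr_deriv ?_
    field_simp
    ring
  refine monotoneOn_of_deriv_nonneg (convex_Ioo 0 1)
    (fun x hx => (hderiv x hx).continuousAt.continuousWithinAt)
    (fun x hx => (hderiv x (interior_subset hx)).differentiableAt.differentiableWithinAt)
    fun x hx => ?_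
  rw [interior_Ioo] at hx
  obtain ⟨hx0, hx1⟩ := hx
  rw [(hderiv x ⟨hx0, hx1⟩).deriv, sub_nonneg, le_div_iff₀ (by nlinarith)]
  nlinarith [sq_nonneg (2 * x - 1)]

theorem two_mul_sq_sub_le_bernoulliKL {s r : ℝ} (hs : s ∈ Icc 0 1) (hr : r ∈ Ioo 0 1) :
    2 * (s - r) ^ 2 ≤ bernoulliKL s r := by
  set G : ℝ → ℝ := fun x => log x - log (1 - x) - 4 * x
  set F : ℝ → ℝ := fun x => x * log x - x * log r + (1 - x) * log (1 - x)
    - (1 - x) * log (1 - r) - 2 * (x - r) ^ 2 with hF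
  have hFs : F s = bernoulliKL s r - 2 * (s - r) ^ 2 := by
    simp only [hF, bernoulliKL, mul_log_div _ hr.1.ne', mul_log_div _ (sub_pos.2 hr.2).ne']
    ring
  have hF_cont : Continuous F :=
    have := continuous_mul_log.comp (continuous_sub_left (1 : ℝ))
    by fun_prop
  have hF_deriv : ∀ x ∈ Ioo (0 : ℝ) 1, HasDerivAt F (G x - G r) x := by
    intro x hx
    have h1x : 1 - x ≠ 0 := (sub_pos.2 hx.2).ne'
    have := ((((hasDerivAt_mul_log hx.1.ne').sub ((hasDerivAt_id x).mul_const (log r))).add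
      ((hasDerivAt_mul_log h1x).comp x ((hasDerivAt_id x).const_sub 1))).sub
      (((hasDerivAt_id x).const_sub 1).mul_const (log (1 - r)))).sub
      ((((hasDerivAt_id x).sub_const r).pow 2).const_mul 2)
    refine this.congr_deriv ?_
    simp only [G, id]
    ring
  have hF_diff : DifferentiableOn ℝ F (Ioo 0 1) :=
    fun x hx => (hF_deriv x hx).differentiableAt.differentiableWithinAt
  have hmin : IsMinOn F (Icc 0 1) r :=
    isMinOn_Icc_of_deriv hF_cont.continuousAt hF_cont.continuousAt hF_cont.continuousAt
      (hF_diff.mono (Ioo_subset_Ioo_right hr.2.le)) (hF_diff.mono (Ioo_subset_Ioo_left hr.1.le))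
      (fun x hx => ?_) (fun x hx => ?_)
  · have : F r = 0 := by simp [hF]
    linarith [isMinOn_iff.1 hmin s hs]
  · rw [(hF_deriv x ⟨hx.1, hx.2.trans hr.2⟩).deriv, sub_nonpos]
    exact monotoneOn_log_sub_log_one_sub_sub_four_mul ⟨hx.1, hx.2.trans hr.2⟩ hr hx.2.le
  · rw [(hF_deriv x ⟨hr.1.trans hx.1, hx.2⟩).deriv, sub_nonneg]
    exact monotoneOn_log_sub_log_one_sub_sub_four_mul hr ⟨hr.1.trans hx.1, hx.2⟩ hx.1.le

theorem bernoulliKL_nonneg {s r : ℝ} (hs : s ∈ Icc 0 1) (hr : r ∈ Ioo 0 1) :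
    0 ≤ bernoulliKL s r :=
  (by positivity : (0 : ℝ) ≤ 2 * (s - r) ^ 2).trans (two_mul_sq_sub_le_bernoulliKL hs hr)

section ProbabilityVector

variable {ι : Type*} [Fintype ι] {q : ι → ℝ}

lemma le_one_of_sum_eq_one (hq0 : ∀ a, 0 ≤ q a) (hq1 : ∑ a, q a = 1) (a : ι) : q a ≤ 1 :=
  hq1 ▸ Finset.single_le_sum (fun b _ => hq0 b) (Finset.mem_univ a)

lemma eq_zero_of_sum_eq_one_of_eq_one (hq0 : ∀ a, 0 ≤ q a) (hq1 : ∑ a, q a = 1) {a b : ι}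
    (ha : q a = 1) (hab : a ≠ b) : q b = 0 := by
  have := Finset.add_le_sum (fun c _ => hq0 c) (Finset.mem_univ a) (Finset.mem_univ b) hab
  linarith [hq0 b]

end ProbabilityVector

lemma two_mul_sq_mul_sq_le_mul_self_mul_bernoulliKL {p ε x : ℝ} (hp : 0 < p) (hε : 0 < ε)
    (hpε : p + ε ≤ 1) (hx : x ∈ Icc 0 1) :
    2 * ε ^ 2 * x ^ 2 * (1 - x) ^ 2 ≤ x * x * bernoulliKL (p + ε) (p + ε * x) := by
  rcases hx.2.lt_or_eq with hx1 | rfl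
  · have hr : p + ε * x ∈ Ioo 0 1 := ⟨by nlinarith [hx.1], by nlinarith⟩
    have := two_mul_sq_sub_le_bernoulliKL ⟨by linarith, hpε⟩ hr
    calc 2 * ε ^ 2 * x ^ 2 * (1 - x) ^ 2 = x * x * (2 * (p + ε - (p + ε * x)) ^ 2) := by ring
      _ ≤ x * x * bernoulliKL (p + ε) (p + ε * x) :=
        mul_le_mul_of_nonneg_left this (mul_self_nonneg x)
  · simp

lemma mul_mul_bernoulliKL_ite_nonneg {ι : Type*} [Fintype ι] [DecidableEq ι] {p ε : ℝ}
    (hp : p ∈ Ioo 0 1) (hε : 0 < ε) (hpε : p + ε ≤ 1) {q : ι → ℝ} (hq0 : ∀ a, 0 ≤ q a)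
    (hq1 : ∑ a, q a = 1) (a b : ι) :
    0 ≤ q a * q b * bernoulliKL (if a = b then p + ε else p) (p + ε * q a) := by
  have hs : (if a = b then p + ε else p) ∈ Icc 0 1 := by
    split_ifs <;> exact ⟨by linarith [hp.1], by linarith [hp.2]⟩
  have hqa_le := le_one_of_sum_eq_one hq0 hq1 a
  rcases (show p + ε * q a ≤ 1 by nlinarith).lt_or_eq with hr | hr
  · exact mul_nonneg (mul_nonneg (hq0 a) (hq0 b))
      (bernoulliKL_nonneg hs ⟨by nlinarith [hp.1, hq0 a], hr⟩)
  · -- `p + ε * q a = 1` forces `q a = 1`: only the diagonal term survives, and it vanishes.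
    have hqa : q a = 1 := by nlinarith
    rcases eq_or_ne a b with rfl | hab
    · simp [hqa]
    · simp [eq_zero_of_sum_eq_one_of_eq_one hq0 hq1 hqa hab]

theorem stmt_17_general (K : ℕ) (p ε : ℝ)
    (hp : p ∈ Set.Ioo (0:ℝ) 1) (hε : ε ∈ Set.Ioo (0:ℝ) 1) (hpε : p + ε ≤ 1)
    (q : Fin K → ℝ) (hq0 : ∀ a, 0 ≤ q a) (hq1 : ∑ a, q a = 1)
    (qmax : ℝ) (hmem : ∃ a, q a = qmax)
    (kl : ℝ → ℝ → ℝ)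
    (hkl : ∀ s r, kl s r =
      s * Real.log (s / r) + (1 - s) * Real.log ((1 - s) / (1 - r))) :
    2 * ε ^ 2 * qmax ^ 2 * (1 - qmax) ^ 2 ≤
      ∑ a : Fin K, ∑ astar : Fin K,
        q a * q astar * kl (if a = astar then p + ε else p) (p + ε * q a) := by
  obtain ⟨am, rfl⟩ := hmem
  obtain rfl : kl = bernoulliKL := funext fun s => funext (hkl s)
  calc 2 * ε ^ 2 * q am ^ 2 * (1 - q am) ^ 2
      ≤ q am * q am * bernoulliKL (if am = am then p + ε else p) (p + ε * q am) := by
        rw [if_pos rfl]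
        exact two_mul_sq_mul_sq_le_mul_self_mul_bernoulliKL hp.1 hε.1 hpε
          ⟨hq0 am, le_one_of_sum_eq_one hq0 hq1 am⟩
    _ ≤ ∑ x : Fin K × Fin K,
          q x.1 * q x.2 * bernoulliKL (if x.1 = x.2 then p + ε else p) (p + ε * q x.1) :=
        Finset.single_le_sum (fun x _ => mul_mul_bernoulliKL_ite_nonneg hp hε.1 hpε hq0 hq1 x.1 x.2)
          (Finset.mem_univ (am, am))
    _ = _ := Fintype.sum_prod_type _

/-- Lower bound on the Shannon information gain under Thompson sampling in Example 1. -/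
theorem stmt_17 (K : ℕ) (hK : 2 ≤ K) (p ε : ℝ)
    (hp : p ∈ Set.Ioo (0:ℝ) 1) (hε : ε ∈ Set.Ioo (0:ℝ) 1) (hpε : p + ε ≤ 1)
    (q : Fin K → ℝ) (hq0 : ∀ a, 0 ≤ q a) (hq1 : ∑ a, q a = 1)
    (qmax : ℝ) (hub : ∀ a, q a ≤ qmax) (hmem : ∃ a, q a = qmax)
    (kl : ℝ → ℝ → ℝ)
    (hkl : ∀ s r, kl s r =
      s * Real.log (s / r) + (1 - s) * Real.log ((1 - s) / (1 - r))) :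
    2 * ε ^ 2 * qmax ^ 2 * (1 - qmax) ^ 2 ≤
      ∑ a : Fin K, ∑ astar : Fin K,
        q a * q astar * kl (if a = astar then p + ε else p) (p + ε * q a) :=
  stmt_17_general K p ε hp hε hpε q hq0 hq1 qmax hmem kl hkl
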